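/- arXiv:2601.16680 — 3 statements merged into one kernel-verified Lean document; each statement's English description precedes it below -/
import Mathlib

section
/- Let G be a vertex-transitive finite graph on N vertices and S ⊆ V(G) with |S| = M. Then the clique number of the induced subgraph satisfies ω(G[S]) ≥ ⌈(M/N)·ω(G)⌉. -/
/-!
Let `C` be a maximum clique. For a uniformly random automorphism `σ`, each vertex lies in `σ • C`
with probability `ω(G) / N`, since a transitive group action has fibres of equal size over the
orbit. So `|σ • C ∩ S|` has mean `M ω(G) / N`, and some `σ` attains at least that; `σ • C ∩ S` is
a clique of `G[S]`.
-/

/-- A graph is vertex-transitive if its automorphism group acts transitively on vertices. -/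
def SimpleGraph.IsVertexTransitive {V : Type*} (G : SimpleGraph V) : Prop :=
  ∀ u v : V, ∃ σ : G ≃g G, σ u = v

open Finset MulAction Pointwise

namespace MulAction

variable {Γ X : Type*} [Group Γ] [MulAction Γ X] [Fintype Γ] [DecidableEq X]

theorem card_filter_smul_eq_eq_card_filter_smul_eq_self [IsPretransitive Γ X] (x y : X) :
    #{g : Γ | g • x = y} = #{g : Γ | g • x = x} := by
  obtain ⟨h, rfl⟩ := exists_smul_eq Γ x y
  refine card_nbij' (h⁻¹ * ·) (h * ·) ?_ ?_ ?_ ?_ <;> intro g <;> simp [mul_smul, inv_smul_eq_iff]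

theorem card_filter_smul_mem [IsPretransitive Γ X] (x : X) (S : Finset X) :
    #{g : Γ | g • x ∈ S} = #S * #{g : Γ | g • x = x} := by
  rw [← sum_card_fiberwise_eq_card_filter]
  exact sum_const_nat fun y _ ↦ card_filter_smul_eq_eq_card_filter_smul_eq_self x y

theorem card_eq_card_mul_card_filter_smul_eq_self [IsPretransitive Γ X] [Fintype X] (x : X) :
    Fintype.card Γ = Fintype.card X * #{g : Γ | g • x = x} := by
  simpa using card_filter_smul_mem (Γ := Γ) x univ

theorem sum_card_smul_finset_inter (C S : Finset X) :
    ∑ g : Γ, #(g • C ∩ S) = ∑ c ∈ C, #{g : Γ | g • c ∈ S} := by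
  have (g : Γ) : #(g • C ∩ S) = #{c ∈ C | g • c ∈ S} := by
    rw [← card_smul_finset g⁻¹, smul_finset_inter, inv_smul_smul, ← filter_mem_eq_inter]
    simp only [mem_inv_smul_finset_iff]
  simp_rw [this]
  exact sum_card_bipartiteAbove_eq_sum_card_bipartiteBelow (r := fun g c ↦ g • c ∈ S)

theorem card_mul_sum_card_smul_finset_inter [IsPretransitive Γ X] [Fintype X] (C S : Finset X) :
    Fintype.card X * ∑ g : Γ, #(g • C ∩ S) = #C * #S * Fintype.card Γ := by
  rw [sum_card_smul_finset_inter, mul_sum, mul_assoc, ← sum_const_nat]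
  intro c _
  rw [card_filter_smul_mem, card_eq_card_mul_card_filter_smul_eq_self (Γ := Γ) c]
  ring

theorem exists_card_mul_card_le_card_mul_card_smul_finset_inter [IsPretransitive Γ X] [Fintype X]
    (C S : Finset X) : ∃ g : Γ, #C * #S ≤ Fintype.card X * #(g • C ∩ S) := by
  -- some translate of `C` meets `S` at least as much as the average translate does
  obtain ⟨g, -, hg⟩ := exists_le_of_sum_le (s := univ) (f := fun _ : Γ ↦ #C * #S)
    (g := fun g ↦ Fintype.card X * #(g • C ∩ S)) univ_nonempty <| by
    rw [sum_const, card_univ, smul_eq_mul, ← mul_sum, card_mul_sum_card_smul_finset_inter,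
      mul_comm]
  exact ⟨g, hg⟩

end MulAction

namespace SimpleGraph

variable {V : Type*} {G : SimpleGraph V}

instance Iso.applyMulAction : MulAction (G ≃g G) V where
  smul σ v := σ v
  one_smul _ := rfl
  mul_smul _ _ _ := rfl

theorem IsVertexTransitive.isPretransitive (h : G.IsVertexTransitive) :
    IsPretransitive (G ≃g G) V :=
  ⟨h⟩

theorem IsClique.smul_finset [DecidableEq V] {C : Finset V} (hC : G.IsClique (C : Set V))
    (σ : G ≃g G) :
    G.IsClique ((σ • C : Finset V) : Set V) := by
  rw [coe_smul_finset]
  rintro _ ⟨a, ha, rfl⟩ _ ⟨b, hb, rfl⟩ hab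
  exact σ.map_adj_iff.2 (hC ha hb (ne_of_apply_ne _ hab))

theorem IsClique.card_inter_le_cliqueNum_induce [Finite V] [DecidableEq V] {T : Finset V}
    (hT : G.IsClique (T : Set V)) (S : Finset V) :
    #(T ∩ S) ≤ (G.induce (S : Set V)).cliqueNum := by
  let t : Finset (S : Set V) := (T ∩ S).subtype (· ∈ (S : Set V))
  have ht : #t = #(T ∩ S) := by
    rw [card_subtype]
    exact congrArg card (filter_true_of_mem fun _ h ↦ (mem_inter.1 h).2)
  have htc : (G.induce (S : Set V)).IsClique (t : Set (S : Set V)) := by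
    rw [isClique_induce_iff]
    refine hT.subset ?_
    rintro _ ⟨v, hv, rfl⟩
    exact (mem_inter.1 (mem_subtype.1 hv)).1
  exact ht ▸ htc.card_le_cliqueNum

instance [Finite V] : Finite (G ≃g G) := DFunLike.finite _

end SimpleGraph

theorem stmt_1 {V : Type*} [Fintype V] (G : SimpleGraph V)
    (htrans : G.IsVertexTransitive)
    (N M : ℕ) (hN : Fintype.card V = N)
    (S : Finset V) (hM : S.card = M) :
    ⌈((M : ℝ) / (N : ℝ)) * (G.cliqueNum : ℝ)⌉₊ ≤ (G.induce (S : Set V)).cliqueNum := by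
  classical
  have := htrans.isPretransitive
  have := Fintype.ofFinite (G ≃g G)
  obtain ⟨C, hC⟩ := G.exists_isNClique_cliqueNum
  obtain ⟨σ, hσ⟩ := exists_card_mul_card_le_card_mul_card_smul_finset_inter (Γ := G ≃g G) C S
  refine (Nat.ceil_le.2 ?_).trans ((hC.isClique.smul_finset σ).card_inter_le_cliqueNum_induce S)
  rw [hC.card_eq, hM, hN] at hσ
  rcases N.eq_zero_or_pos with rfl | hN0
  · simp
  rw [div_mul_eq_mul_div, div_le_iff₀ (by positivity), mul_comm _ (N : ℝ)]
  exact_mod_cast mul_comm M G.cliqueNum ▸ hσ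
end

section
/- For integers n ≥ 1 and 0 ≤ k ≤ n/2, the partial binomial sum satisfies Σ_{i=0}^{k} C(n,i) ≤ 2^{n·h₂(k/n)}. -/
/-- The binary entropy function (base 2). -/
noncomputable def binEnt (x : ℝ) : ℝ :=
  -(x * Real.logb 2 x) - (1 - x) * Real.logb 2 (1 - x)

/-!
With `p = k / n ≤ 1/2`, the binomial expansion `1 = (p + (1 - p))^n` dominates the terms with
`i ≤ k`, and each of them is at least `C(n,i) p^k (1-p)^(n-k)` because `p ≤ 1 - p`. Hence
`∑_{i ≤ k} C(n,i) ≤ (p^k (1-p)^(n-k))⁻¹`, and this reciprocal is exactly `2^{n h₂(k/n)}`.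
-/

open Finset

theorem pow_mul_pow_sub_le_pow_mul_pow_sub {R : Type*} [CommSemiring R] [PartialOrder R]
    [IsOrderedRing R] {a b : R} (ha : 0 ≤ a) (hab : a ≤ b)
    {i k n : ℕ} (hik : i ≤ k) (hkn : k ≤ n) :
    a ^ k * b ^ (n - k) ≤ a ^ i * b ^ (n - i) := by
  have hb : 0 ≤ b := ha.trans hab
  calc a ^ k * b ^ (n - k) = a ^ i * a ^ (k - i) * b ^ (n - k) := by
        rw [← pow_add, Nat.add_sub_cancel' hik]
    _ ≤ a ^ i * b ^ (k - i) * b ^ (n - k) := by gcongr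
    _ = a ^ i * b ^ (n - i) := by
        rw [mul_assoc, ← pow_add]
        congr 2
        omega

theorem sum_range_choose_mul_pow_mul_pow_sub_le_one {R : Type*} [CommRing R] [PartialOrder R]
    [IsOrderedRing R] {p : R} (hp : 0 ≤ p) (hp' : p ≤ 1 - p)
    {k n : ℕ} (hkn : k ≤ n) :
    ((∑ i ∈ range (k + 1), n.choose i : ℕ) : R) * (p ^ k * (1 - p) ^ (n - k)) ≤ 1 := by
  calc ((∑ i ∈ range (k + 1), n.choose i : ℕ) : R) * (p ^ k * (1 - p) ^ (n - k))
      = ∑ i ∈ range (k + 1), p ^ k * (1 - p) ^ (n - k) * n.choose i := by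
        push_cast
        rw [sum_mul]
        exact sum_congr rfl fun i _ => mul_comm _ _
    _ ≤ ∑ i ∈ range (k + 1), p ^ i * (1 - p) ^ (n - i) * n.choose i := by
        refine sum_le_sum fun i hi => mul_le_mul_of_nonneg_right ?_ (Nat.cast_nonneg _)
        exact pow_mul_pow_sub_le_pow_mul_pow_sub hp hp'
          (Nat.lt_succ_iff.mp (mem_range.mp hi)) hkn
    _ ≤ ∑ i ∈ range (n + 1), p ^ i * (1 - p) ^ (n - i) * n.choose i := by
        have hq : 0 ≤ 1 - p := hp.trans hp'
        exact sum_le_sum_of_subset_of_nonneg (range_subset_range.mpr (by omega))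
          fun i _ _ => by positivity
    _ = 1 := by rw [← add_pow, add_sub_cancel, one_pow]

theorem two_rpow_mul_binEnt_div {k n : ℕ} (hk : 0 < k) (hkn : k < n) :
    (2 : ℝ) ^ ((n : ℝ) * binEnt ((k : ℝ) / n)) =
      (((k : ℝ) / n) ^ k * (1 - (k : ℝ) / n) ^ (n - k))⁻¹ := by
  have hn : (0 : ℝ) < n := by exact_mod_cast hk.trans hkn
  set p : ℝ := (k : ℝ) / n with hp
  have hp0 : 0 < p := by positivity
  have hp1 : 0 < 1 - p := by rw [hp, sub_pos, div_lt_one hn]; exact_mod_cast hkn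
  have hnp : (n : ℝ) * p = k := by rw [hp]; field_simp
  have hnq : (n : ℝ) * (1 - p) = ((n - k : ℕ) : ℝ) := by
    rw [Nat.cast_sub hkn.le, hp]; field_simp
  have hexp : (n : ℝ) * binEnt p
      = Real.logb 2 p * (-(k : ℝ)) + Real.logb 2 (1 - p) * (-((n - k : ℕ) : ℝ)) := by
    rw [binEnt, ← hnp, ← hnq]
    ring
  rw [hexp, Real.rpow_add two_pos, Real.rpow_mul zero_le_two, Real.rpow_mul zero_le_two,
    Real.rpow_logb two_pos (by norm_num) hp0, Real.rpow_logb two_pos (by norm_num) hp1,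
    Real.rpow_neg hp0.le, Real.rpow_neg hp1.le, Real.rpow_natCast, Real.rpow_natCast, mul_inv]

theorem stmt_5_general (n k : ℕ) (hk : (k : ℝ) ≤ (n : ℝ) / 2) :
    ((∑ i ∈ Finset.range (k + 1), n.choose i : ℕ) : ℝ) ≤
      (2 : ℝ) ^ ((n : ℝ) * binEnt ((k : ℝ) / (n : ℝ))) := by
  rcases Nat.eq_zero_or_pos k with rfl | hk0
  · simp [binEnt]
  have hkn : k < n := by
    have : (0 : ℝ) < k := by exact_mod_cast hk0
    exact_mod_cast (show (k : ℝ) < n by linarith)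
  have hn : (0 : ℝ) < n := by exact_mod_cast hk0.trans hkn
  have hp : (k : ℝ) / n ≤ 1 - (k : ℝ) / n := by
    rw [le_sub_iff_add_le, ← two_mul, ← mul_div_assoc, div_le_one hn]
    linarith
  have hweight : 0 < ((k : ℝ) / n) ^ k * (1 - (k : ℝ) / n) ^ (n - k) := by
    have : 0 < (k : ℝ) / n := by positivity
    have : 0 < 1 - (k : ℝ) / n := by linarith
    positivity
  rw [two_rpow_mul_binEnt_div hk0 hkn, inv_eq_one_div, le_div_iff₀ hweight]
  exact sum_range_choose_mul_pow_mul_pow_sub_le_one (by positivity) hp hkn.le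

theorem stmt_5 (n k : ℕ) (hn : 1 ≤ n) (hk : (k : ℝ) ≤ (n : ℝ) / 2) :
    ((∑ i ∈ Finset.range (k + 1), n.choose i : ℕ) : ℝ) ≤
      (2 : ℝ) ^ ((n : ℝ) * binEnt ((k : ℝ) / (n : ℝ))) :=
  stmt_5_general n k hk
end

section
/- Let 0 < d₁ < 1 and d₁/2 ≤ p ≤ 1 − d₁/2. With α = (p − d₁/2)·d₁/(2(1−d₁)) and β = (1 − d₁/2)(p − d₁/2)/(1−d₁), and q = p − d₁/2 + 2α, the expression q·h₂(β/q) + (1−q)·h₂((p−β)/(1−q)) equals h₂(d₁/2). -/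
lemma binEnt_symm (x : ℝ) : binEnt (1 - x) = binEnt x := by
  simp only [binEnt, sub_sub_cancel]; ring

theorem stmt_19 (d₁ p : ℝ) (hd0 : 0 < d₁) (hd1 : d₁ < 1)
    (hp1 : d₁ / 2 ≤ p) (hp2 : p ≤ 1 - d₁ / 2)
    (α β q : ℝ)
    (hα : α = (p - d₁ / 2) * d₁ / (2 * (1 - d₁)))
    (hβ : β = (1 - d₁ / 2) * (p - d₁ / 2) / (1 - d₁))
    (hq : q = p - d₁ / 2 + 2 * α) :
    q * binEnt (β / q) + (1 - q) * binEnt ((p - β) / (1 - q)) = binEnt (d₁ / 2) := by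
  have hden : (1 : ℝ) - d₁ ≠ 0 := by linarith
  have hqval : q = (p - d₁ / 2) / (1 - d₁) := by
    rw [hq, hα]; field_simp; ring
  have hβq : β = (1 - d₁ / 2) * q := by
    rw [hβ, hqval]; ring
  have hpβ : p - β = d₁ / 2 * (1 - q) := by
    rw [hβ, hqval]; field_simp; ring
  by_cases h1 : p = d₁ / 2
  · have hq0 : q = 0 := by rw [hqval, h1]; simp
    have hβ0 : β = 0 := by rw [hβq, hq0]; ring
    rw [hq0, hβ0]
    simp [h1]
  · by_cases h2 : p = 1 - d₁ / 2
    · have hq1 : q = 1 := by rw [hqval, h2]; field_simp; ring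
      have hβ12 : β = 1 - d₁ / 2 := by rw [hβq, hq1]; ring
      rw [hq1, hβ12, div_one, binEnt_symm]; ring
    · have hq0 : q ≠ 0 := by
        rw [hqval]
        intro h
        rcases div_eq_zero_iff.mp h with h' | h'
        · exact h1 (by linarith)
        · exact hden (by linarith)
      have hq1 : (1 : ℝ) - q ≠ 0 := by
        intro h
        have : q = 1 := by linarith
        rw [hqval] at this
        have : p - d₁ / 2 = 1 - d₁ := by
          field_simp at this; linarith
        exact h2 (by linarith)
      have e1 : β / q = 1 - d₁ / 2 := by
        rw [hβq, mul_div_assoc, div_self hq0, mul_one]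
      have e2 : (p - β) / (1 - q) = d₁ / 2 := by
        rw [hpβ, mul_div_assoc, div_self hq1, mul_one]
      rw [e1, e2, binEnt_symm]
      ring
end
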